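/- Let μ be a finite Borel measure on ℝ³ whose support is contained in a compact set K, and let ψ : ℝ³ → ℝ be bounded and measurable. Then the single layer potential u(x) = ∫ ψ(y)/(4π‖x − y‖₂) dμ(y) is a harmonic function of x on the open set ℝ³ \ K: it is twice differentiable there and the sum of its second partial derivatives along the coordinate directions vanishes at every x ∉ K. -/

import Mathlib

/-!
Write `U(z) = 1 / (4π‖z‖)`, so that the potential is the convolution `ψ ⋆ U` taken against `μ`.
For `x ∉ K` the translates `x' - y` with `x'` near `x` and `y ∈ K` stay in a compact set away
from `0`, on which `U` and all its derivatives are bounded; since `μ` is finite and `ψ` bounded,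
dominated convergence lets us differentiate under the integral sign, twice. Hence `ψ ⋆ U` is `C²`
off `K` with `Δ (ψ ⋆ U) = ψ ⋆ ΔU`, and `ΔU = 0` away from the origin by a direct computation of
the Hessian of `‖z‖⁻¹` in dimension three.
-/

open Real MeasureTheory Filter Topology Metric Set ContinuousLinearMap InnerProductSpace
open scoped Convolution Laplacian RealInnerProductSpace

universe u

section LocalBounds

variable {E F : Type*} [NormedAddCommGroup E] [ProperSpace E] {K U : Set E} {x : E}

theorem IsCompact.exists_isCompact_eventually_forall_sub_mem (hK : IsCompact K) (hU : IsOpen U)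
    (hx : ∀ y ∈ K, x - y ∈ U) :
    ∃ C, IsCompact C ∧ C ⊆ U ∧ ∀ᶠ x' in 𝓝 x, ∀ y ∈ K, x' - y ∈ C := by
  have hxK : IsCompact ((x - ·) '' K) := hK.image (continuous_sub_left x)
  obtain ⟨δ, hδ, hδU⟩ := hxK.exists_cthickening_subset_open hU (by
    rintro _ ⟨y, hy, rfl⟩
    exact hx y hy)
  refine ⟨_, hxK.cthickening, hδU, ?_⟩
  filter_upwards [ball_mem_nhds x hδ] with x' hx' y hy
  refine mem_cthickening_of_dist_le _ (x - y) _ _ (mem_image_of_mem _ hy) ?_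
  rw [dist_sub_right]
  exact (mem_ball.1 hx').le

theorem IsCompact.isOpen_setOf_forall_sub_mem (hK : IsCompact K) (hU : IsOpen U) :
    IsOpen {x | ∀ y ∈ K, x - y ∈ U} := by
  refine isOpen_iff_mem_nhds.2 fun x hx => ?_
  obtain ⟨C, -, hCU, hC⟩ := hK.exists_isCompact_eventually_forall_sub_mem hU hx
  filter_upwards [hC] with x' hx' y hy using hCU (hx' y hy)

theorem IsCompact.exists_bound_eventually_forall_sub_mem [NormedAddCommGroup F] {H : E → F}
    (hK : IsCompact K) (hU : IsOpen U) (hH : ContinuousOn H U) (hx : ∀ y ∈ K, x - y ∈ U) :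
    ∃ B, ∀ᶠ x' in 𝓝 x, ∀ y ∈ K, x' - y ∈ U ∧ ‖H (x' - y)‖ ≤ B := by
  obtain ⟨C, hC, hCU, hxC⟩ := hK.exists_isCompact_eventually_forall_sub_mem hU hx
  obtain ⟨B, hB⟩ := hC.exists_bound_of_continuousOn (hH.mono hCU)
  exact ⟨B, hxC.mono fun x' hx' y hy => ⟨hCU (hx' y hy), hB _ (hx' y hy)⟩⟩

end LocalBounds

theorem norm_smul_le_mul_of_le {𝕜 E : Type*} [NormedField 𝕜] [SeminormedAddCommGroup E]
    [NormedSpace 𝕜 E] {a : 𝕜} {M B : ℝ} {v : E} (ha : ‖a‖ ≤ M) (hv : ‖v‖ ≤ B) : ‖a • v‖ ≤ M * B :=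
  (norm_smul a v).trans_le (mul_le_mul ha hv (norm_nonneg v) ((norm_nonneg a).trans ha))

section Convolution

variable {E F : Type*} [NormedAddCommGroup E] [MeasurableSpace E] [BorelSpace E]
  [NormedAddCommGroup F] [NormedSpace ℝ F] {μ : Measure E} {K U : Set E} {ψ : E → ℝ} {M : ℝ}
  {x : E}

theorem aestronglyMeasurable_smul_comp_sub {H : E → F} (hK : IsCompact K)
    (hμK : ∀ᵐ y ∂μ, y ∈ K) (hψ : AEStronglyMeasurable ψ μ) (hH : ContinuousOn H U)
    (hx : ∀ y ∈ K, x - y ∈ U) :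
    AEStronglyMeasurable (fun y => ψ y • H (x - y)) μ := by
  rw [← Measure.restrict_eq_self_of_ae_mem hμK] at hψ ⊢
  have hHx : ContinuousOn (fun y => H (x - y)) K :=
    hH.comp (continuousOn_const.sub continuousOn_id) hx
  exact hψ.smul (hHx.aestronglyMeasurable_of_isCompact hK hK.measurableSet)

theorem convolutionExistsAt_lsmul_of_continuousOn [ProperSpace E] [IsFiniteMeasure μ] {H : E → F}
    (hK : IsCompact K) (hμK : ∀ᵐ y ∂μ, y ∈ K) (hψ : AEStronglyMeasurable ψ μ)
    (hψb : ∀ᵐ y ∂μ, ‖ψ y‖ ≤ M) (hU : IsOpen U) (hH : ContinuousOn H U)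
    (hx : ∀ y ∈ K, x - y ∈ U) :
    ConvolutionExistsAt ψ H x (lsmul ℝ ℝ) μ := by
  obtain ⟨B, hB⟩ := hK.exists_bound_eventually_forall_sub_mem hU hH hx
  refine Integrable.of_bound (aestronglyMeasurable_smul_comp_sub hK hμK hψ hH hx) (M * B) ?_
  filter_upwards [hμK, hψb] with y hy hψy
  exact norm_smul_le_mul_of_le hψy (hB.self_of_nhds y hy).2

theorem continuousAt_convolution_lsmul [ProperSpace E] [IsFiniteMeasure μ] {G : E → F}
    (hK : IsCompact K) (hμK : ∀ᵐ y ∂μ, y ∈ K) (hψ : AEStronglyMeasurable ψ μ)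
    (hψb : ∀ᵐ y ∂μ, ‖ψ y‖ ≤ M) (hU : IsOpen U) (hG : ContinuousOn G U)
    (hx : ∀ y ∈ K, x - y ∈ U) :
    ContinuousAt (ψ ⋆[lsmul ℝ ℝ, μ] G) x := by
  obtain ⟨B, hB⟩ := hK.exists_bound_eventually_forall_sub_mem hU hG hx
  refine continuousAt_of_dominated (bound := fun _ => M * B) ?_ ?_ (integrable_const _) ?_
  · filter_upwards [hB] with x' hx'
    exact aestronglyMeasurable_smul_comp_sub hK hμK hψ hG fun y hy => (hx' y hy).1
  · filter_upwards [hB] with x' hx'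
    filter_upwards [hμK, hψb] with y hy hψy using norm_smul_le_mul_of_le hψy (hx' y hy).2
  · filter_upwards [hμK] with y hy
    exact continuousAt_const.smul ((hG.continuousAt (hU.mem_nhds (hx y hy))).comp
      (f := (· - y)) (continuous_sub_right y).continuousAt)

theorem hasFDerivAt_convolution_lsmul [NormedSpace ℝ E] [ProperSpace E] [CompleteSpace F]
    [IsFiniteMeasure μ] {G : E → F}
    (hK : IsCompact K) (hμK : ∀ᵐ y ∂μ, y ∈ K) (hψ : AEStronglyMeasurable ψ μ)
    (hψb : ∀ᵐ y ∂μ, ‖ψ y‖ ≤ M) (hU : IsOpen U) (hG : ContDiffOn ℝ 1 G U)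
    (hx : ∀ y ∈ K, x - y ∈ U) :
    HasFDerivAt (ψ ⋆[lsmul ℝ ℝ, μ] G) ((ψ ⋆[lsmul ℝ ℝ, μ] fderiv ℝ G) x) x := by
  have hG' := hG.continuousOn_fderiv_of_isOpen hU le_rfl
  obtain ⟨B, hB⟩ := hK.exists_bound_eventually_forall_sub_mem hU hG' hx
  obtain ⟨s, hs, hsB⟩ := hB.exists_mem
  refine hasFDerivAt_integral_of_dominated_of_fderiv_le (bound := fun _ => M * B)
    (F := fun x y => ψ y • G (x - y)) (F' := fun x y => ψ y • fderiv ℝ G (x - y)) hs ?_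
    (convolutionExistsAt_lsmul_of_continuousOn hK hμK hψ hψb hU hG.continuousOn hx)
    (aestronglyMeasurable_smul_comp_sub hK hμK hψ hG' hx) ?_ (integrable_const _) ?_
  · filter_upwards [hB] with x' hx'
    exact aestronglyMeasurable_smul_comp_sub hK hμK hψ hG.continuousOn fun y hy => (hx' y hy).1
  · filter_upwards [hμK, hψb] with y hy hψy x' hx'
    exact norm_smul_le_mul_of_le hψy (hsB x' hx' y hy).2
  · filter_upwards [hμK] with y hy x' hx'
    have hGd := (hG.differentiableOn one_ne_zero).differentiableAt (hU.mem_nhds (hsB x' hx' y hy).1)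
    have hGy := hGd.hasFDerivAt.comp x' (hasFDerivAt_sub_const (𝕜 := ℝ) y)
    rw [ContinuousLinearMap.comp_id] at hGy
    exact hGy.const_smul (ψ y)

end Convolution

-- `E` and `F` share a universe because the induction step applies the statement to `fderiv ℝ G`,
-- which takes values in `E →L[ℝ] F`.
theorem contDiffOn_convolution_lsmul {E F : Type u} [NormedAddCommGroup E] [NormedSpace ℝ E]
    [ProperSpace E] [MeasurableSpace E] [BorelSpace E] [NormedAddCommGroup F] [NormedSpace ℝ F]
    [CompleteSpace F] {μ : Measure E} [IsFiniteMeasure μ] {K U : Set E} {ψ : E → ℝ} {M : ℝ}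
    {G : E → F} {n : ℕ} (hK : IsCompact K) (hμK : ∀ᵐ y ∂μ, y ∈ K)
    (hψ : AEStronglyMeasurable ψ μ) (hψb : ∀ᵐ y ∂μ, ‖ψ y‖ ≤ M) (hU : IsOpen U)
    (hG : ContDiffOn ℝ n G U) :
    ContDiffOn ℝ n (ψ ⋆[lsmul ℝ ℝ, μ] G) {x | ∀ y ∈ K, x - y ∈ U} := by
  induction n generalizing F with
  | zero =>
    exact contDiffOn_zero.2 fun x hx =>
      (continuousAt_convolution_lsmul hK hμK hψ hψb hU (contDiffOn_zero.1 hG) hx).continuousWithinAt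
  | succ n ih =>
    have hG1 : ContDiffOn ℝ 1 G U := hG.of_le (by exact_mod_cast Nat.le_add_left 1 n)
    have hderiv := fun x (hx : ∀ y ∈ K, x - y ∈ U) =>
      hasFDerivAt_convolution_lsmul hK hμK hψ hψb hU hG1 hx
    push_cast at hG ⊢
    refine (contDiffOn_succ_iff_fderiv_of_isOpen (hK.isOpen_setOf_forall_sub_mem hU)).2
      ⟨fun x hx => (hderiv x hx).differentiableAt.differentiableWithinAt, by simp, ?_⟩
    exact (ih ((contDiffOn_succ_iff_fderiv_of_isOpen hU).1 hG).2.2).congr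
      fun x hx => (hderiv x hx).fderiv

section Laplacian

variable {E F : Type*} [NormedAddCommGroup E] [InnerProductSpace ℝ E] [FiniteDimensional ℝ E]
  [NormedAddCommGroup F] [NormedSpace ℝ F]

theorem laplacian_eq_sum_fderiv_fderiv {ι : Type*} [Fintype ι] (b : OrthonormalBasis ι ℝ E)
    (f : E → F) (x : E) :
    Δ f x = ∑ i, fderiv ℝ (fderiv ℝ f) x (b i) (b i) := by
  simp [laplacian_eq_iteratedFDeriv_orthonormalBasis f b, iteratedFDeriv_two_apply]

theorem laplacian_eq_sum_fderiv_apply_single {ι : Type*} [Fintype ι] [DecidableEq ι]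
    {f : EuclideanSpace ℝ ι → F} {x : EuclideanSpace ℝ ι}
    (hf : DifferentiableAt ℝ (fderiv ℝ f) x) :
    Δ f x = ∑ i, fderiv ℝ (fun z => fderiv ℝ f z (EuclideanSpace.single i 1)) x
      (EuclideanSpace.single i 1) := by
  simp [laplacian_eq_sum_fderiv_fderiv (EuclideanSpace.basisFun ι ℝ),
    fderiv_clm_apply hf (differentiableAt_const _)]

theorem laplacian_convolution_lsmul [MeasurableSpace E] [BorelSpace E] [CompleteSpace F]
    {μ : Measure E} [IsFiniteMeasure μ] {K U : Set E} {ψ : E → ℝ} {M : ℝ} {G : E → F} {x : E}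
    (hK : IsCompact K) (hμK : ∀ᵐ y ∂μ, y ∈ K) (hψ : AEStronglyMeasurable ψ μ)
    (hψb : ∀ᵐ y ∂μ, ‖ψ y‖ ≤ M) (hU : IsOpen U) (hG : ContDiffOn ℝ 2 G U)
    (hx : ∀ y ∈ K, x - y ∈ U) :
    Δ (ψ ⋆[lsmul ℝ ℝ, μ] G) x = (ψ ⋆[lsmul ℝ ℝ, μ] Δ G) x := by
  let b := stdOrthonormalBasis ℝ E
  let T : (E →L[ℝ] E →L[ℝ] F) →L[ℝ] F :=
    ∑ i, (apply ℝ F (b i)).comp (apply ℝ (E →L[ℝ] F) (b i))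
  have hT : ∀ (f : E → F) z, Δ f z = T (fderiv ℝ (fderiv ℝ f) z) := fun f z => by
    simp [T, laplacian_eq_sum_fderiv_fderiv b]
  have hG1 : ContDiffOn ℝ 1 (fderiv ℝ G) U :=
    ((contDiffOn_succ_iff_fderiv_of_isOpen (n := 1) hU).1 hG).2.2
  have hfderiv : fderiv ℝ (ψ ⋆[lsmul ℝ ℝ, μ] G) =ᶠ[𝓝 x] ψ ⋆[lsmul ℝ ℝ, μ] fderiv ℝ G :=
    eventually_of_mem ((hK.isOpen_setOf_forall_sub_mem hU).mem_nhds hx) fun x' hx' =>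
      (hasFDerivAt_convolution_lsmul hK hμK hψ hψb hU (hG.of_le one_le_two) hx').fderiv
  have hint := convolutionExistsAt_lsmul_of_continuousOn hK hμK hψ hψb hU
    (hG1.continuousOn_fderiv_of_isOpen hU le_rfl) hx
  calc Δ (ψ ⋆[lsmul ℝ ℝ, μ] G) x = T (∫ y, ψ y • fderiv ℝ (fderiv ℝ G) (x - y) ∂μ) := by
        rw [hT, hfderiv.fderiv_eq, (hasFDerivAt_convolution_lsmul hK hμK hψ hψb hU hG1 hx).fderiv]
        rfl
    _ = ∫ y, T (ψ y • fderiv ℝ (fderiv ℝ G) (x - y)) ∂μ := (T.integral_comp_comm hint).symm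
    _ = (ψ ⋆[lsmul ℝ ℝ, μ] Δ G) x := by simp [convolution_lsmul, hT]

end Laplacian

section NewtonKernel

variable {E : Type*} [NormedAddCommGroup E] [InnerProductSpace ℝ E] {z : E}

theorem hasFDerivAt_norm_of_ne_zero (hz : z ≠ 0) :
    HasFDerivAt (fun w : E => ‖w‖) (‖z‖⁻¹ • innerSL ℝ z) z := by
  have h := (hasStrictFDerivAt_norm_sq z).hasFDerivAt.sqrt (by positivity)
  simp only [Real.sqrt_sq (norm_nonneg _)] at h
  convert h using 1
  ext v
  simp only [smul_apply, coe_innerSL_apply, smul_eq_mul, nsmul_eq_mul, Nat.cast_ofNat]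
  field_simp

theorem hasFDerivAt_inv_norm (hz : z ≠ 0) :
    HasFDerivAt (fun w : E => ‖w‖⁻¹) (-‖z‖⁻¹ ^ 3 • innerSL ℝ z) z := by
  refine ((hasDerivAt_inv (norm_ne_zero_iff.2 hz)).comp_hasFDerivAt z
    (hasFDerivAt_norm_of_ne_zero hz)).congr_fderiv ?_
  rw [smul_smul]
  congr 1
  field_simp

theorem fderiv_fderiv_inv_norm_apply (hz : z ≠ 0) (v : E) :
    fderiv ℝ (fderiv ℝ fun w : E => ‖w‖⁻¹) z v v =
      3 * ‖z‖⁻¹ ^ 5 * ⟪z, v⟫ ^ 2 - ‖z‖⁻¹ ^ 3 * ‖v‖ ^ 2 := by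
  have hfd : fderiv ℝ (fun w : E => ‖w‖⁻¹) =ᶠ[𝓝 z] fun w => -‖w‖⁻¹ ^ 3 • innerSL ℝ w :=
    eventually_of_mem (isOpen_compl_singleton.mem_nhds hz) fun w hw =>
      (hasFDerivAt_inv_norm hw).fderiv
  rw [hfd.fderiv_eq,
    ((hasFDerivAt_inv_norm hz).pow 3).fun_neg.fun_smul (innerSL ℝ).hasFDerivAt |>.fderiv]
  simp only [inv_pow, neg_smul, Nat.add_one_sub_one, nsmul_eq_mul, Nat.cast_ofNat, smul_neg,
    neg_neg, add_apply, neg_apply, smul_apply, smulRight_apply, coe_innerSL_apply, smul_eq_mul]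
  rw [innerSL_apply_apply, innerSL_apply_apply, real_inner_self_eq_norm_sq]
  ring

theorem laplacian_inv_norm [FiniteDimensional ℝ E] (hE : Module.finrank ℝ E = 3) (hz : z ≠ 0) :
    Δ (fun w : E => ‖w‖⁻¹) z = 0 := by
  rw [laplacian_eq_sum_fderiv_fderiv (stdOrthonormalBasis ℝ E)]
  simp only [fderiv_fderiv_inv_norm_apply hz, OrthonormalBasis.norm_eq_one, one_pow, mul_one,
    Finset.sum_sub_distrib, ← Finset.mul_sum, OrthonormalBasis.sum_sq_inner_left, Finset.sum_const,
    Finset.card_univ, Fintype.card_fin, hE, nsmul_eq_mul]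
  field_simp
  ring

noncomputable def newtonKernel (z : E) : ℝ := (4 * π)⁻¹ * ‖z‖⁻¹

theorem contDiffOn_newtonKernel {n : WithTop ℕ∞} :
    ContDiffOn ℝ n (newtonKernel (E := E)) {0}ᶜ := fun _ hz =>
  (contDiffAt_const.mul ((contDiffAt_norm ℝ hz).inv (norm_ne_zero_iff.2 hz))).contDiffWithinAt

theorem laplacian_newtonKernel [FiniteDimensional ℝ E] (hE : Module.finrank ℝ E = 3)
    (hz : z ≠ 0) :
    Δ (newtonKernel (E := E)) z = 0 := by
  have hN : newtonKernel (E := E) = (4 * π)⁻¹ • fun w => ‖w‖⁻¹ := rfl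
  have hinv : ContDiffAt ℝ 2 (fun w : E => ‖w‖⁻¹) z :=
    (contDiffAt_norm ℝ hz).inv (norm_ne_zero_iff.2 hz)
  rw [hN, laplacian_smul _ hinv, laplacian_inv_norm hE hz, smul_zero]

end NewtonKernel

/-- Let `μ` be a finite Borel measure on `ℝ³` whose support is contained in a compact set `K`
(i.e. `μ(Kᶜ) = 0`), and let `ψ : ℝ³ → ℝ` be bounded and measurable. Then the single layer
potential `u(x) = ∫ ψ(y)/(4π‖x − y‖) dμ(y)` is harmonic on `ℝ³ \ K`: it is twice
differentiable there and the sum of its second partial derivatives along the coordinate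
directions vanishes at every `x ∉ K`. -/
theorem single_layer_potential_harmonic
    (μ : Measure (EuclideanSpace ℝ (Fin 3))) [IsFiniteMeasure μ]
    (K : Set (EuclideanSpace ℝ (Fin 3))) (hK : IsCompact K) (hsupp : μ Kᶜ = 0)
    (ψ : EuclideanSpace ℝ (Fin 3) → ℝ) (hψ : Measurable ψ)
    (hbd : ∃ M : ℝ, ∀ y, |ψ y| ≤ M) :
    ContDiffOn ℝ 2
      (fun x : EuclideanSpace ℝ (Fin 3) => ∫ y, ψ y / (4 * Real.pi * ‖x - y‖) ∂μ) Kᶜ ∧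
    ∀ x : EuclideanSpace ℝ (Fin 3), x ∉ K →
      ∑ i : Fin 3,
        fderiv ℝ (fun z : EuclideanSpace ℝ (Fin 3) =>
            fderiv ℝ
              (fun x : EuclideanSpace ℝ (Fin 3) => ∫ y, ψ y / (4 * Real.pi * ‖x - y‖) ∂μ) z
              (EuclideanSpace.single i (1 : ℝ)))
          x (EuclideanSpace.single i (1 : ℝ)) = 0 := by
  obtain ⟨M, hM⟩ := hbd
  have hu : (fun x => ∫ y, ψ y / (4 * π * ‖x - y‖) ∂μ) = ψ ⋆[lsmul ℝ ℝ, μ] newtonKernel := by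
    ext x
    simp [convolution_lsmul, newtonKernel, div_eq_mul_inv, mul_comm]
  have hμK : ∀ᵐ y ∂μ, y ∈ K := hsupp
  have hψb : ∀ᵐ y ∂μ, ‖ψ y‖ ≤ M := ae_of_all _ hM
  have hKc : ∀ x ∉ K, ∀ y ∈ K, x - y ∈ ({0}ᶜ : Set _) := fun x hx y hy =>
    sub_ne_zero.2 (ne_of_mem_of_not_mem hy hx).symm
  have hC2 := (contDiffOn_convolution_lsmul (n := 2) hK hμK hψ.aestronglyMeasurable hψb
    isOpen_compl_singleton contDiffOn_newtonKernel).mono hKc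
  rw [hu]
  refine ⟨hC2, fun x hx => ?_⟩
  rw [← laplacian_eq_sum_fderiv_apply_single, laplacian_convolution_lsmul hK hμK
    hψ.aestronglyMeasurable hψb isOpen_compl_singleton contDiffOn_newtonKernel (hKc x hx),
    convolution_lsmul]
  · refine integral_eq_zero_of_ae (hμK.mono fun y hy => ?_)
    simp [laplacian_newtonKernel finrank_euclideanSpace_fin (hKc x hx y hy)]
  · exact ((hC2.contDiffAt (hK.isClosed.isOpen_compl.mem_nhds hx)).fderiv_right
      (m := 1) le_rfl).differentiableAt one_ne_zero
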